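/- arXiv:2407.11331 — 2 statements merged into one kernel-verified Lean document; each statement's English description precedes it below -/
import Mathlib

section
/- Let B ∈ 𝒰³ satisfy (1,1,0) ∈ B and (1,0,1) ∈ B but (0,1,1) ∉ B, and suppose B is not a parallelepiped. Then for every ε ∈ (0,1], the point (1−ε, 1/2, 1/2) is an interior point of B. -/
open Set

/-- A convex body in `ℝ^n`: a compact convex set with nonempty interior. -/
def IsConvexBody {n : ℕ} (K : Set (Fin n → ℝ)) : Prop :=
  Convex ℝ K ∧ IsCompact K ∧ (interior K).Nonempty

/-- `K` is 1-unconditional: closed under sign changes of the coordinates. -/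
def Unconditional {n : ℕ} (K : Set (Fin n → ℝ)) : Prop :=
  ∀ x ∈ K, ∀ ε : Fin n → ℝ, (∀ i, ε i = 1 ∨ ε i = -1) → (fun i => ε i * x i) ∈ K

/-- The direction `d` illuminates the (boundary) point `x` of `K`. -/
def Illuminates {n : ℕ} (K : Set (Fin n → ℝ)) (d x : Fin n → ℝ) : Prop :=
  ∃ ε : ℝ, 0 < ε ∧ x + ε • d ∈ interior K

/-- The set of directions `D` illuminates every boundary point of `K`. -/
def IlluminatesSet {n : ℕ} (K : Set (Fin n → ℝ)) (D : Set (Fin n → ℝ)) : Prop :=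
  ∀ x ∈ frontier K, ∃ d ∈ D, Illuminates K d x

/-- The illumination number: smallest cardinality of a set of nonzero directions
illuminating `K`. -/
noncomputable def illumNumber {n : ℕ} (K : Set (Fin n → ℝ)) : ℕ :=
  sInf {m | ∃ D : Finset (Fin n → ℝ), D.card = m ∧ (∀ d ∈ D, d ≠ 0) ∧
    IlluminatesSet K ↑D}

/-- A parallelepiped: an affine image of the cube `[-1,1]^n`. -/
def IsParallelepiped {n : ℕ} (K : Set (Fin n → ℝ)) : Prop :=
  ∃ T : (Fin n → ℝ) ≃ᵃ[ℝ] (Fin n → ℝ),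
    K = T '' (Set.Icc (fun _ => (-1 : ℝ)) (fun _ => 1))

/-- The standard basis vector `e i`. -/
def stdB {n : ℕ} (i : Fin n) : Fin n → ℝ := Pi.single i 1

/-- The class `𝒰^n`: 1-unconditional convex bodies all of whose standard basis
vectors lie on the boundary. -/
def memU {n : ℕ} (K : Set (Fin n → ℝ)) : Prop :=
  IsConvexBody K ∧ Unconditional K ∧ ∀ i : Fin n, stdB i ∈ frontier K

/-- A 1-unconditional body is cubelike if all its extreme points have all
coordinates nonzero. -/
def Cubelike {n : ℕ} (K : Set (Fin n → ℝ)) : Prop :=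
  ∀ x ∈ Set.extremePoints ℝ K, ∀ i, x i ≠ 0

/-- The all-ones vector `𝟙`. -/
def allOnes {n : ℕ} : Fin n → ℝ := fun _ => 1

/-!
Let `x = (t, 1/2, 1/2)` with `|t| < 1` and suppose `x ∉ interior B`. A supporting functional
`f` at `x` satisfies `f ≤ f x` on `B`. Since `x` lies strictly between `(1, 1/2, 1/2)` and
`(-1, 1/2, 1/2)`, both in `B`, `f` kills `e₀`; comparing with `(1,1,0)` and `(1,0,1)` gives
`f = λ (y₁ + y₂)` with `λ > 0`. So `|y₁| + |y₂| ≤ 1` on `B`, and as unconditional convex bodies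
are solid (closed under shrinking coordinates in absolute value), `B` is exactly the prism
`[-1, 1] × {|y₁| + |y₂| ≤ 1}`, a linear image of the cube.
-/

namespace Unconditional

variable {n : ℕ} {K : Set (Fin n → ℝ)}

theorem update_mem_of_abs_le (hc : Convex ℝ K) (hu : Unconditional K) {z : Fin n → ℝ}
    (hz : z ∈ K) (j : Fin n) {c : ℝ} (hcz : |c| ≤ |z j|) : Function.update z j c ∈ K := by
  have hflip : Function.update z j (-z j) ∈ K := by
    convert hu z hz (Function.update 1 j (-1)) (fun i => by
      rcases eq_or_ne i j with rfl | h <;> simp [*]) using 1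
    funext i; rcases eq_or_ne i j with rfl | h <;> simp [*]
  -- The admissible values of the `j`-th coordinate form an interval containing `±z j`.
  have hline : Convex ℝ ((fun c : ℝ => Function.update z j c) ⁻¹' K) := by
    intro a ha b hb s t hs ht hst
    show Function.update z j (s * a + t * b) ∈ K
    convert hc ha hb hs ht hst using 1
    funext i; rcases eq_or_ne i j with rfl | h
    · simp
    · simp [h, ← add_mul, hst]
  have hseg := hline.ordConnected
  rcases abs_cases (z j) with ⟨h, _⟩ | ⟨h, _⟩
  · refine hseg.out (x := -z j) (y := z j) ?_ ?_ ⟨?_, ?_⟩ <;> simp_all [abs_le]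
  · refine hseg.out (x := z j) (y := -z j) ?_ ?_ ⟨?_, ?_⟩ <;> simp_all [abs_le]

theorem mem_of_abs_le (hc : Convex ℝ K) (hu : Unconditional K) {x y : Fin n → ℝ} (hy : y ∈ K)
    (hxy : ∀ i, |x i| ≤ |y i|) : x ∈ K := by
  suffices ∀ s : Finset (Fin n), ∀ x : Fin n → ℝ, (∀ i, |x i| ≤ |y i|) →
      (∀ i ∉ s, x i = y i) → x ∈ K from this Finset.univ x hxy (by simp)
  intro s
  induction s using Finset.induction_on with
  | empty =>
    intro x _ hxy
    rwa [funext fun i => hxy i (Finset.notMem_empty i)]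
  | insert j s _ ih =>
    intro x hxy hxs
    have hx' : Function.update x j (y j) ∈ K := by
      refine ih _ (fun i => ?_) (fun i hi => ?_)
      · rcases eq_or_ne i j with rfl | h <;> simp [*]
      · rcases eq_or_ne i j with rfl | h
        · simp
        · simp [h, hxs i (by simp [h, hi])]
    simpa using update_mem_of_abs_le hc hu hx' j (c := x j) (by simpa using hxy j)

theorem zero_mem_interior (hc : Convex ℝ K) (hu : Unconditional K) (hK : (interior K).Nonempty) :
    (0 : Fin n → ℝ) ∈ interior K := by
  obtain ⟨u, hu'⟩ := hK
  have hneg : -u ∈ K := by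
    convert hu u (interior_subset hu') (fun _ => -1) (fun _ => Or.inr rfl) using 1
    ext i; simp
  simpa using hc.combo_interior_self_mem_interior hu' hneg (a := 1 / 2) (b := 1 / 2)
    (by norm_num) (by norm_num) (by norm_num)

end Unconditional

theorem memU.zero_mem_interior {n : ℕ} {K : Set (Fin n → ℝ)} (hK : memU K) :
    (0 : Fin n → ℝ) ∈ interior K :=
  Unconditional.zero_mem_interior hK.1.1 hK.2.1 hK.1.2.2

theorem memU.abs_apply_le_one {n : ℕ} {K : Set (Fin n → ℝ)} (hK : memU K) {y : Fin n → ℝ}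
    (hy : y ∈ K) (i : Fin n) : |y i| ≤ 1 := by
  by_contra! hgt
  have hpos : 0 < |y i| := one_pos.trans hgt
  have hax : |y i| • stdB i ∈ K := by
    refine Unconditional.mem_of_abs_le hK.1.1 hK.2.1 hy fun k => ?_
    rcases eq_or_ne k i with rfl | h <;> simp [stdB, *]
  have : stdB i ∈ interior K := by
    simpa [hpos.ne'] using hK.1.1.combo_self_interior_mem_interior hax hK.zero_mem_interior
      (a := 1 / |y i|) (b := 1 - 1 / |y i|) (by positivity)
      (by rw [sub_pos, div_lt_one hpos]; exact hgt) (by ring)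
  exact (hK.2.2 i).2 this

theorem Convex.exists_forall_le_of_notMem_interior {E : Type*} [NormedAddCommGroup E]
    [NormedSpace ℝ E] {K : Set E} (hc : Convex ℝ K) (hK : (interior K).Nonempty) {x : E}
    (hx : x ∉ interior K) :
    ∃ f : StrongDual ℝ E, (∀ z ∈ interior K, f z < f x) ∧ ∀ y ∈ K, f y ≤ f x := by
  obtain ⟨f, hf⟩ := geometric_hahn_banach_open_point hc.interior isOpen_interior hx
  refine ⟨f, hf, fun y hy => ?_⟩
  have hcl : closure (interior K) ⊆ {y | f y ≤ f x} :=
    closure_minimal (fun z hz => (hf z hz).le) (isClosed_le f.continuous continuous_const)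
  exact hcl (hc.closure_interior_eq_closure_of_nonempty_interior hK ▸ subset_closure hy)

def diamondPrism : Set (Fin 3 → ℝ) := {y | |y 0| ≤ 1 ∧ |y 1| + |y 2| ≤ 1}

lemma abs_add_le_one_and_abs_sub_le_one_iff (a b : ℝ) :
    |a + b| ≤ 1 ∧ |a - b| ≤ 1 ↔ |a| + |b| ≤ 1 := by
  refine ⟨fun ⟨h₁, h₂⟩ => ?_, fun h => ⟨(abs_add_le a b).trans h, (abs_sub a b).trans h⟩⟩
  rw [abs_le] at h₁ h₂
  rcases abs_cases a with ⟨ha, _⟩ | ⟨ha, _⟩ <;> rcases abs_cases b with ⟨hb, _⟩ | ⟨hb, _⟩ <;>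
    linarith

noncomputable def diamondPrismEquiv : (Fin 3 → ℝ) ≃ₗ[ℝ] (Fin 3 → ℝ) where
  toFun y := ![y 0, (y 1 + y 2) / 2, (y 1 - y 2) / 2]
  invFun y := ![y 0, y 1 + y 2, y 1 - y 2]
  map_add' x y := by funext k; fin_cases k <;> simp <;> ring
  map_smul' c x := by funext k; fin_cases k <;> simp <;> ring
  left_inv x := by funext k; fin_cases k <;> simp <;> ring
  right_inv x := by funext k; fin_cases k <;> simp

lemma mem_Icc_neg_one_one_iff {ι : Type*} (v : ι → ℝ) :
    v ∈ Icc (fun _ => -1) (fun _ => 1) ↔ ∀ i, |v i| ≤ 1 := by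
  simp only [mem_Icc, Pi.le_def, abs_le, forall_and]

theorem isParallelepiped_diamondPrism : IsParallelepiped diamondPrism := by
  refine ⟨diamondPrismEquiv.toAffineEquiv, ?_⟩
  ext y
  rw [LinearEquiv.coe_toAffineEquiv, diamondPrismEquiv.image_eq_preimage_symm, mem_preimage,
    mem_Icc_neg_one_one_iff, Fin.forall_fin_succ, Fin.forall_fin_two]
  exact and_congr_right' (abs_add_le_one_and_abs_sub_le_one_iff _ _).symm

theorem diamondPrism_subset {K : Set (Fin 3 → ℝ)} (hc : Convex ℝ K) (hu : Unconditional K)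
    (h110 : (![1, 1, 0] : Fin 3 → ℝ) ∈ K) (h101 : (![1, 0, 1] : Fin 3 → ℝ) ∈ K) :
    diamondPrism ⊆ K := by
  rintro y ⟨hy0, hy12⟩
  have hy1 : |y 1| ≤ 1 := by linarith [abs_nonneg (y 2)]
  have hz : (![1, |y 1|, 1 - |y 1|] : Fin 3 → ℝ) ∈ K := by
    convert hc h110 h101 (abs_nonneg (y 1)) (sub_nonneg.2 hy1) (by ring) using 1
    funext k; fin_cases k <;> simp
  refine Unconditional.mem_of_abs_le hc hu hz fun k => ?_
  fin_cases k
  · simpa using hy0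
  · simp
  · simpa [abs_of_nonneg (sub_nonneg.2 hy1)] using (le_sub_iff_add_le'.2 hy12)

theorem subset_diamondPrism {K : Set (Fin 3 → ℝ)} (hK : memU K)
    (hsum : ∀ y ∈ K, y 1 + y 2 ≤ 1) : K ⊆ diamondPrism := by
  intro y hy
  have habs : (fun i => |y i|) ∈ K :=
    Unconditional.mem_of_abs_le hK.1.1 hK.2.1 hy fun i => (abs_abs (y i)).le
  exact ⟨hK.abs_apply_le_one hy 0, hsum _ habs⟩

theorem sum_le_one_of_notMem_interior {K : Set (Fin 3 → ℝ)} (hK : memU K)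
    (h110 : (![1, 1, 0] : Fin 3 → ℝ) ∈ K) (h101 : (![1, 0, 1] : Fin 3 → ℝ) ∈ K) {t : ℝ}
    (ht : |t| < 1) (hx : (![t, 1/2, 1/2] : Fin 3 → ℝ) ∉ interior K) :
    ∀ y ∈ K, y 1 + y 2 ≤ 1 := by
  obtain ⟨f, hf_int, hf_le⟩ := hK.1.1.exists_forall_le_of_notMem_interior hK.1.2.2 hx
  obtain ⟨a, b, c, hf⟩ : ∃ a b c : ℝ, ∀ y, f y = y 0 * a + y 1 * b + y 2 * c := by
    refine ⟨f (Pi.single 0 1), f (Pi.single 1 1), f (Pi.single 2 1), fun y => ?_⟩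
    conv_lhs => rw [pi_eq_sum_univ' y]
    simp [Fin.sum_univ_three]
  have hm : (![1, 1/2, 1/2] : Fin 3 → ℝ) ∈ K := by
    convert hK.1.1 h110 h101 (by norm_num : (0 : ℝ) ≤ 1/2) (by norm_num : (0 : ℝ) ≤ 1/2)
      (by norm_num) using 1
    funext k; fin_cases k <;> norm_num
  have hm' : (![-1, 1/2, 1/2] : Fin 3 → ℝ) ∈ K :=
    Unconditional.mem_of_abs_le hK.1.1 hK.2.1 hm fun k => by fin_cases k <;> simp
  have h0 := hf_int 0 hK.zero_mem_interior
  have e1 := hf_le _ hm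
  have e2 := hf_le _ hm'
  have e3 := hf_le _ h110
  have e4 := hf_le _ h101
  simp only [hf, Pi.zero_apply, zero_mul, add_zero, one_div, Matrix.cons_val_zero,
    Matrix.cons_val_one, Matrix.cons_val, one_mul, add_le_add_iff_right, neg_mul] at h0 e1 e2 e3 e4
  rw [abs_lt] at ht
  obtain rfl : a = 0 := by nlinarith
  obtain rfl : b = c := by linarith
  have hb : 0 < b := by linarith
  intro y hy
  have hy := hf_le y hy
  simp only [hf, mul_zero, zero_add, one_div, Matrix.cons_val_zero, Matrix.cons_val_one,
    Matrix.cons_val] at hy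
  nlinarith

theorem stmt9_general (B : Set (Fin 3 → ℝ)) (hB : memU B)
    (h110 : (![1, 1, 0] : Fin 3 → ℝ) ∈ B)
    (h101 : (![1, 0, 1] : Fin 3 → ℝ) ∈ B)
    (hpar : ¬ IsParallelepiped B) :
    ∀ ε : ℝ, 0 < ε → ε ≤ 1 →
      (![1 - ε, 1/2, 1/2] : Fin 3 → ℝ) ∈ interior B := by
  intro ε hε hε1
  by_contra hx
  have hsum : ∀ y ∈ B, y 1 + y 2 ≤ 1 :=
    sum_le_one_of_notMem_interior hB h110 h101 (abs_lt.2 ⟨by linarith, by linarith⟩) hx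
  have hB_eq : B = diamondPrism :=
    (subset_diamondPrism hB hsum).antisymm (diamondPrism_subset hB.1.1 hB.2.1 h110 h101)
  exact hpar (hB_eq ▸ isParallelepiped_diamondPrism)

/-- If `B ∈ 𝒰³` contains `(1,1,0)` and `(1,0,1)` but not `(0,1,1)`,
and `B` is not a parallelepiped, then `(1-ε, 1/2, 1/2)` is in the interior of `B`
for every `ε ∈ (0,1]`. -/
theorem stmt9 (B : Set (Fin 3 → ℝ)) (hB : memU B)
    (h110 : (![1, 1, 0] : Fin 3 → ℝ) ∈ B)
    (h101 : (![1, 0, 1] : Fin 3 → ℝ) ∈ B)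
    (h011 : (![0, 1, 1] : Fin 3 → ℝ) ∉ B)
    (hpar : ¬ IsParallelepiped B) :
    ∀ ε : ℝ, 0 < ε → ε ≤ 1 →
      (![1 - ε, 1/2, 1/2] : Fin 3 → ℝ) ∈ interior B :=
  stmt9_general B hB h110 h101 hpar
end

section
/- Let n ≥ 4 and let B ∈ 𝒰^n. Suppose there exists s₀ ∈ {1,…,n} such that 𝟙 − e_i ∈ B for all i ≠ s₀ while 𝟙 − e_{s₀} ∉ B. Then there exist δ ∈ (0,1) and a set D of directions with D = −D and |D| ≤ 2^n − 4 that illuminates B, where every d ∈ D has exactly one coordinate equal to ±1, at an index different from s₀, and all other coordinates equal to ±δ. In particular 𝕀(B) ≤ 2^n − 4. -/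
open Set

/-!
Unconditionality and convexity make `B` solid: if `x ∈ B` and `|z j| ≤ |x j|` for all `j`,
then `z ∈ B`; so a point strictly dominated, coordinatewise in absolute value, by a point of `B`
lies in `interior B`. Compactness turns `𝟙 - e s₀ ∉ B` into a uniform `δ`: every `x ∈ B` has a
coordinate `z ≠ s₀` with `|x z| < 1 - 2δ`.

The directions are indexed by the `2^n - 4` sign patterns `σ` that are not constant off `s₀`;
the coordinate `±1` sits at an index `select σ` taken among three fixed indices `p q r ≠ s₀`,
never the odd one out among them, and invariant under `σ ↦ -σ`. To illuminate `x ∈ ∂B`, let `σ`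
point from `x` towards the origin except at `z`, where it is chosen so that `σ` stays
non-constant off `s₀` and `select σ ≠ z`. If `∑_{j ≠ s₀} (1 - |x j|) > 1`, a convex combination
of the points `𝟙 - e j` dominates `|x|`, strictly wherever `|x j| < 1`, and a short step along
`σ` enters the interior. Otherwise every coordinate off `s₀, z` exceeds `2δ`, and the step of
length `|x i|`, `i = select σ`, lands strictly below the midpoint of `|x|` and `𝟙 - e i`.
-/

open Finset Filter Topology Function

variable {n : ℕ} {B : Set (Fin n → ℝ)}

theorem eventually_abs_add_mul_lt {a e c : ℝ} (hac : |a| ≤ c) (h : a * e < 0 ∨ |a| < c) :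
    ∀ᶠ ε in 𝓝[>] (0 : ℝ), |a + ε * e| < c := by
  rcases h with h | h
  · have he : e ≠ 0 := by rintro rfl; simp at h
    filter_upwards [Ioo_mem_nhdsGT (show 0 < -(a * e) / e ^ 2 by
      apply div_pos <;> [linarith; positivity])] with ε ⟨hε0, hε⟩
    rw [lt_div_iff₀ (by positivity)] at hε
    exact (sq_lt_sq.1 (by nlinarith)).trans_le hac
  · have : Continuous fun ε : ℝ => |a + ε * e| := by fun_prop
    exact ((this.tendsto 0).mono_left nhdsWithin_le_nhds).eventually (gt_mem_nhds (by simpa))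

theorem abs_add_lt_half_add {a e : ℝ} (ha : |a| ≤ 1) (he0 : e ≠ 0) (he : |e| < 1 / 2)
    (h : a * e ≤ 0 ∨ |a| + 2 * |e| < 1) : |a + e| < (|a| + 1) / 2 := by
  have := abs_pos.2 he0
  rcases h with h | h <;> cases abs_cases a <;> cases abs_cases e <;> cases abs_cases (a + e) <;>
    nlinarith

namespace Unconditional

variable (hu : Unconditional B) (hc : Convex ℝ B)
include hu hc

theorem mul_mem {x t : Fin n → ℝ} (hx : x ∈ B) (ht : ∀ j, |t j| ≤ 1) : t * x ∈ B := by
  suffices ∀ S : Finset (Fin n), ∀ t : Fin n → ℝ, (∀ j, |t j| ≤ 1) →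
      (∀ j ∉ S, t j = 1 ∨ t j = -1) → t * x ∈ B from this univ t ht (by simp)
  intro S
  induction S using Finset.induction_on with
  | empty => exact fun t _ hS => hu x hx t fun j => hS j (notMem_empty j)
  | insert i S hiS ih =>
    intro t ht hS
    have hside : ∀ s : ℝ, (s = 1 ∨ s = -1) → update t i s * x ∈ B := by
      refine fun s hs => ih _ (fun j => ?_) (fun j hj => ?_)
      · rcases eq_or_ne j i with rfl | hji
        · rcases hs with rfl | rfl <;> simp
        · simpa [hji] using ht j
      · rcases eq_or_ne j i with rfl | hji
        · simpa using hs
        · simpa [hji] using hS j (by simp [hji, hj])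
    obtain ⟨hlo, hhi⟩ := abs_le.1 (ht i)
    convert hc (hside 1 (Or.inl rfl)) (hside (-1) (Or.inr rfl))
      (a := (1 + t i) / 2) (b := (1 - t i) / 2) (by linarith) (by linarith) (by ring) using 1
    funext j
    rcases eq_or_ne j i with rfl | hji
    · simp; ring
    · simp [hji]; ring

theorem mem_of_abs_le_s11 {x z : Fin n → ℝ} (hx : x ∈ B) (hz : ∀ j, |z j| ≤ |x j|) : z ∈ B := by
  have hz0 : ∀ j, x j = 0 → z j = 0 := fun j h => abs_nonpos_iff.1 (by simpa [h] using hz j)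
  convert hu.mul_mem hc hx (t := fun j => if x j = 0 then 0 else z j / x j) (fun j => ?_) using 1
  · funext j
    by_cases h : x j = 0 <;> simp [h, hz0]
  · split_ifs with h
    · simp
    · rw [abs_div, div_le_one (abs_pos.2 h)]
      exact hz j

theorem mem_interior_of_abs_lt {b y : Fin n → ℝ} (hb : b ∈ B) (hy : ∀ j, |y j| < b j) :
    y ∈ interior B := by
  have hopen : IsOpen {y : Fin n → ℝ | ∀ j, |y j| < b j} := by
    simp only [Set.ofPred_forall]
    exact isOpen_iInter_of_finite fun j => isOpen_lt (by fun_prop) continuous_const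
  exact interior_maximal
    (fun y hy => hu.mem_of_abs_le_s11 hc hb fun j => (hy j).le.trans (le_abs_self _)) hopen hy

theorem zero_mem_interior_s11 (hint : (interior B).Nonempty) : 0 ∈ interior B := by
  obtain ⟨p, hp⟩ := hint
  have hneg : -p ∈ B := by
    convert hu p (interior_subset hp) (fun _ => -1) (fun _ => Or.inr rfl) using 1
    ext; simp
  simpa using hc.combo_interior_self_mem_interior hp hneg (by norm_num : (0 : ℝ) < 1 / 2)
    (by norm_num : (0 : ℝ) ≤ 1 / 2) (by norm_num)

section Illumination

variable {x d : Fin n → ℝ}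

theorem illuminates_of_abs_le {c : Fin n → ℝ} (hcB : c ∈ B) (hxc : ∀ j, |x j| ≤ c j)
    (hd : ∀ j, d j * x j < 0 ∨ |x j| < c j) : Illuminates B d x := by
  have hev : ∀ᶠ ε in 𝓝[>] (0 : ℝ), ∀ j, |x j + ε * d j| < c j :=
    eventually_all.2 fun j => eventually_abs_add_mul_lt (hxc j) (by rw [mul_comm]; exact hd j)
  obtain ⟨ε, hε, hεpos⟩ := (hev.and self_mem_nhdsWithin).exists
  exact ⟨ε, hεpos, hu.mem_interior_of_abs_lt hc hcB fun j => by simpa using hε j⟩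

theorem illuminates_of_mem_allOnes_sub {i : Fin n} {δ : ℝ} (hx : x ∈ B) (hx1 : ∀ j, |x j| ≤ 1)
    (hi : allOnes - stdB i ∈ B) (hxi : x i ≠ 0) (hdi : d i * x i = -|x i|) (hδ : 0 < δ)
    (hδ2 : δ < 1 / 2) (hd : ∀ j ≠ i, |d j| = δ ∧ (d j * x j ≤ 0 ∨ |x j| < 1 - 2 * δ)) :
    Illuminates B d x := by
  have hxi' : 0 < |x i| := abs_pos.2 hxi
  have hmid : (1 / 2 : ℝ) • |x| + (1 / 2 : ℝ) • (allOnes - stdB i) ∈ B :=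
    hc (hu.mem_of_abs_le_s11 hc hx fun j => by simp) hi (by norm_num) (by norm_num) (by norm_num)
  refine ⟨|x i|, hxi', hu.mem_interior_of_abs_lt hc hmid fun j => ?_⟩
  rcases eq_or_ne j i with rfl | hji
  · have : x j + |x j| * d j = 0 := mul_left_cancel₀ hxi <| by
      linear_combination |x j| * hdi - abs_mul_abs_self (x j)
    simpa [allOnes, stdB, this] using hxi
  · obtain ⟨hdj, hsign⟩ := hd j hji
    have hdj0 : d j ≠ 0 := by rintro h; simp [h] at hdj; linarith
    have hej : |(|x i| * d j)| = |x i| * δ := by rw [abs_mul, abs_abs, hdj]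
    have hstep := abs_add_lt_half_add (hx1 j) (mul_ne_zero hxi'.ne' hdj0)
      (by rw [hej]; nlinarith [hx1 i])
      (hsign.imp (fun h => by nlinarith [abs_nonneg (x i)]) fun h => by rw [hej]; nlinarith [hx1 i])
    simp [allOnes, stdB, hji]
    linarith

end Illumination

end Unconditional

namespace memU

theorem abs_le_one (hB : memU B) {x : Fin n → ℝ} (hx : x ∈ B) (j : Fin n) : |x j| ≤ 1 := by
  obtain ⟨⟨hc, -, hint⟩, hu, hfr⟩ := hB
  by_contra! h
  have hpos : 0 < |x j| := one_pos.trans h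
  have hscaled : |x j| • stdB j ∈ B := hu.mem_of_abs_le_s11 hc hx fun k => by
    rcases eq_or_ne k j with rfl | hk <;> simp [stdB, *]
  have := hc.add_smul_sub_mem_interior hscaled (hu.zero_mem_interior_s11 hc hint)
    (t := 1 - 1 / |x j|) ⟨by rw [sub_pos, div_lt_one hpos]; exact h, by simp [hpos.le]⟩
  refine (hfr j).2 ?_
  convert this using 1
  simp only [zero_sub, smul_neg, smul_smul, ← sub_eq_add_neg, ← sub_smul]
  rw [show |x j| - (1 - 1 / |x j|) * |x j| = 1 by field_simp; ring, one_smul]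

theorem exists_abs_lt_one_sub (hB : memU B) {s₀ : Fin n} (hout : allOnes - stdB s₀ ∉ B) :
    ∃ δ : ℝ, 0 < δ ∧ δ < 1 / 2 ∧ ∀ x ∈ B, ∃ j ≠ s₀, |x j| < 1 - 2 * δ := by
  obtain ⟨⟨hc, hK, hint⟩, hu, -⟩ := hB
  -- `g x` is the least `|x j|` with `j ≠ s₀`, capped at `1` by a dummy term at `s₀`
  let f : Fin n → (Fin n → ℝ) → ℝ := fun j x => if j = s₀ then 1 else |x j|
  let g : (Fin n → ℝ) → ℝ := fun x => univ.inf' ⟨s₀, mem_univ _⟩ fun j => f j x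
  have hg : Continuous g := Continuous.finset_inf'_apply _ fun j _ => by
    by_cases h : j = s₀ <;> simp only [f, h, if_true, if_false] <;> fun_prop
  obtain ⟨y, hy, hmax⟩ := hK.exists_isMaxOn (hint.mono interior_subset) hg.continuousOn
  have hgy : g y < 1 := by
    by_contra! h
    refine hout (hu.mem_of_abs_le_s11 hc hy fun j => ?_)
    have := (le_inf'_iff _ _).1 h j (mem_univ _)
    rcases eq_or_ne j s₀ with rfl | hj <;> simp_all [f, allOnes, stdB]
  have hgy0 : 0 ≤ g y := (le_inf'_iff _ _).2 fun j _ => by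
    by_cases h : j = s₀ <;> simp [f, h]
  refine ⟨(1 - g y) / 4, by linarith, by linarith, fun x hx => ?_⟩
  obtain ⟨j, -, hj⟩ := exists_mem_eq_inf' ⟨s₀, mem_univ _⟩ fun j => f j x
  have hxy : g x ≤ g y := hmax hx
  have hgx : g x = f j x := hj
  by_cases hjs : j = s₀
  · simp only [hgx, f, hjs, if_true] at hxy
    linarith
  · refine ⟨j, hjs, ?_⟩
    simp only [hgx, f, hjs, if_false] at hxy
    linarith

end memU

theorem exists_mem_abs_le_of_one_lt_sum (hc : Convex ℝ B) {s₀ : Fin n}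
    (hin : ∀ i ≠ s₀, allOnes - stdB i ∈ B) {x : Fin n → ℝ} (hx1 : ∀ j, |x j| ≤ 1)
    (hβ : 1 < ∑ j ∈ univ.erase s₀, (1 - |x j|)) :
    ∃ c ∈ B, ∀ j, |x j| ≤ c j ∧ (|x j| < 1 → |x j| < c j) := by
  set β := ∑ j ∈ univ.erase s₀, (1 - |x j|)
  have hβ0 : 0 < β := one_pos.trans hβ
  set w : Fin n → ℝ := fun j => (1 - |x j|) / β
  have hw1 : ∑ j ∈ univ.erase s₀, w j = 1 := by rw [← sum_div, div_self hβ0.ne']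
  have hmem := hc.sum_mem (fun j _ => div_nonneg (sub_nonneg.2 (hx1 j)) hβ0.le) hw1
    fun j hj => hin j (ne_of_mem_erase hj)
  refine ⟨∑ i ∈ univ.erase s₀, w i • (allOnes - stdB i), hmem, fun j => ?_⟩
  have hwj : w j ≤ 1 - |x j| := div_le_self (sub_nonneg.2 (hx1 j)) hβ.le
  have hwj' : |x j| < 1 → w j < 1 - |x j| := fun h => div_lt_self (by linarith) hβ
  have hcj : (∑ i ∈ univ.erase s₀, w i • (allOnes - stdB i) : Fin n → ℝ) j =
      1 - if j = s₀ then 0 else w j := by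
    simp only [Finset.sum_apply, Pi.smul_apply, Pi.sub_apply, smul_eq_mul, mul_sub, sum_sub_distrib]
    simp [allOnes, stdB, Pi.single_apply, hw1, eq_comm (a := j)]
  rcases eq_or_ne j s₀ with rfl | hj
  · simpa [hcj] using hx1 j
  · simp only [hcj, hj, if_false]
    exact ⟨by linarith, fun h => by linarith [hwj' h]⟩

def boolSign (b : Bool) : ℝ := if b then 1 else -1

theorem boolSign_eq_or (b : Bool) : boolSign b = 1 ∨ boolSign b = -1 := by
  cases b <;> simp [boolSign]

theorem abs_boolSign (b : Bool) : |boolSign b| = 1 := by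
  cases b <;> simp [boolSign]

theorem boolSign_decide_neg_mul (a : ℝ) : boolSign (decide (a < 0)) * a = -|a| := by
  by_cases h : a < 0
  · simp [boolSign, h, abs_of_neg h]
  · simp [boolSign, h, abs_of_nonneg (not_lt.1 h)]

def NonconstantOff (s₀ : Fin n) (σ : Fin n → Bool) : Prop :=
  ∃ j ≠ s₀, ∃ k ≠ s₀, σ j ≠ σ k

instance (s₀ : Fin n) : DecidablePred (NonconstantOff s₀) := fun σ => by
  unfold NonconstantOff; infer_instance

theorem NonconstantOff.not {s₀ : Fin n} {σ : Fin n → Bool} (h : NonconstantOff s₀ σ) :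
    NonconstantOff s₀ fun j => !σ j := by
  obtain ⟨j, hj, k, hk, hjk⟩ := h
  exact ⟨j, hj, k, hk, by simpa using hjk⟩

theorem card_filter_nonconstantOff_le {s₀ p : Fin n} (hp : p ≠ s₀) :
    #(univ.filter (NonconstantOff s₀)) ≤ 2 ^ n - 4 := by
  let g : Bool × Bool → Fin n → Bool := fun ab j => if j = s₀ then ab.1 else ab.2
  have hconst : 4 ≤ #(univ.filter fun σ => ¬NonconstantOff s₀ σ) := by
    refine (card_le_card_of_injOn g (fun ab _ => ?_) fun ab _ ab' _ h => ?_ :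
      #(univ : Finset (Bool × Bool)) ≤ _)
    · simp +contextual [NonconstantOff, g]
    · have h₀ := congrFun h s₀
      have h₁ := congrFun h p
      simp only [g, if_true, hp, if_false] at h₀ h₁
      exact Prod.ext h₀ h₁
  have := card_filter_add_card_filter_not (s := (univ : Finset (Fin n → Bool))) (NonconstantOff s₀)
  simp only [card_univ, Fintype.card_fun, Fintype.card_bool, Fintype.card_fin] at this
  omega

section Select

variable (p q r : Fin n)

def select (σ : Fin n → Bool) : Fin n :=
  if σ q = σ r then q else if σ p = σ q then p else r

variable {p q r}

theorem select_eq_or (σ : Fin n → Bool) :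
    select p q r σ = p ∨ select p q r σ = q ∨ select p q r σ = r := by
  unfold select; split_ifs <;> simp

theorem select_not (σ : Fin n → Bool) : select p q r (fun j => !σ j) = select p q r σ := by
  simp [select]

variable (hpq : p ≠ q) (hpr : p ≠ r) (hqr : q ≠ r)
include hpq hpr hqr

theorem exists_ne_select_eq (σ : Fin n → Bool) :
    ∃ k, (k = p ∨ k = q ∨ k = r) ∧ k ≠ select p q r σ ∧ σ k = σ (select p q r σ) := by
  unfold select
  split_ifs with h₁ h₂
  · exact ⟨r, by simp, hqr.symm, h₁.symm⟩
  · exact ⟨q, by simp, hpq.symm, h₂.symm⟩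
  · refine ⟨p, by simp, hpr, ?_⟩
    revert h₁ h₂; cases σ p <;> cases σ q <;> cases σ r <;> simp

theorem exists_select_update_ne (σ : Fin n → Bool) (z : Fin n) :
    ∃ v, select p q r (update σ z v) ≠ z := by
  rcases eq_or_ne z p with rfl | hzp
  · refine ⟨!σ q, ?_⟩
    simp only [select, update_of_ne hpq.symm, update_of_ne hpr.symm, update_self]
    split_ifs <;> grind
  rcases eq_or_ne z q with rfl | hzq
  · refine ⟨!σ r, ?_⟩
    simp only [select, update_of_ne hpq, update_of_ne hqr.symm, update_self]
    split_ifs <;> grind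
  rcases eq_or_ne z r with rfl | hzr
  · refine ⟨σ q, ?_⟩
    simp [select, hqr]
  · refine ⟨true, fun h => ?_⟩
    rcases select_eq_or (p := p) (q := q) (r := r) (update σ z true) with h' | h' | h' <;>
      rw [h] at h' <;> contradiction

end Select

section Directions

variable {s₀ p q r : Fin n} (hp : p ≠ s₀) (hq : q ≠ s₀) (hr : r ≠ s₀)
  (hpq : p ≠ q) (hpr : p ≠ r) (hqr : q ≠ r)

include hp hq hr in
theorem select_ne (σ : Fin n → Bool) : select p q r σ ≠ s₀ := by
  rcases select_eq_or (p := p) (q := q) (r := r) σ with h | h | h <;> rw [h] <;> assumption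

include hp hq hr hpq hpr hqr in
theorem exists_nonconstantOff_update_select_ne (τ : Fin n → Bool) {z : Fin n} (hz : z ≠ s₀) :
    ∃ v, NonconstantOff s₀ (update τ z v) ∧ select p q r (update τ z v) ≠ z := by
  by_cases hτ : ∃ a ≠ s₀, a ≠ z ∧ ∃ b ≠ s₀, b ≠ z ∧ τ a ≠ τ b
  · obtain ⟨a, ha, haz, b, hb, hbz, hab⟩ := hτ
    obtain ⟨v, hv⟩ := exists_select_update_ne hpq hpr hqr τ z
    exact ⟨v, ⟨a, ha, b, hb, by simpa [update_of_ne haz, update_of_ne hbz]⟩, hv⟩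
  push Not at hτ
  -- `τ` is constant off `s₀` and `z`, so setting `z` against it makes `z` the odd one out
  obtain ⟨w, hw, hwz⟩ : ∃ w ≠ s₀, w ≠ z := by
    rcases eq_or_ne z p with rfl | hzp
    exacts [⟨q, hq, hpq.symm⟩, ⟨p, hp, hzp.symm⟩]
  refine ⟨!τ w, ⟨z, hz, w, hw, by simp [update_of_ne hwz]⟩, fun h => ?_⟩
  obtain ⟨k, hk, hks, hkσ⟩ := exists_ne_select_eq hpq hpr hqr (update τ z (!τ w))
  rw [h] at hks hkσ
  have hk₀ : k ≠ s₀ := by rcases hk with rfl | rfl | rfl <;> assumption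
  simp [update_of_ne hks, hτ k hk₀ hks w hw hwz] at hkσ

variable (p q r) in
def dir (δ : ℝ) (σ : Fin n → Bool) : Fin n → ℝ :=
  fun j => (if j = select p q r σ then 1 else δ) * boolSign (σ j)

theorem dir_apply_select (δ : ℝ) (σ : Fin n → Bool) :
    dir p q r δ σ (select p q r σ) = boolSign (σ (select p q r σ)) := by
  simp [dir]

theorem dir_apply_of_ne {δ : ℝ} {σ : Fin n → Bool} {j : Fin n} (hj : j ≠ select p q r σ) :
    dir p q r δ σ j = δ * boolSign (σ j) := by
  simp [dir, hj]

theorem dir_not (δ : ℝ) (σ : Fin n → Bool) : dir p q r δ (fun j => !σ j) = -dir p q r δ σ := by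
  funext j
  cases h : σ j <;> simp [dir, select_not, boolSign, h]

include hp hq hr hpq hpr hqr in
theorem memU.exists_nonconstantOff_illuminates (hB : memU B)
    (hin : ∀ i ≠ s₀, allOnes - stdB i ∈ B) {δ : ℝ} (hδ : 0 < δ)
    (hsmall : ∀ x ∈ B, ∃ j ≠ s₀, |x j| < 1 - 2 * δ) {x : Fin n → ℝ} (hx : x ∈ B) :
    ∃ σ, NonconstantOff s₀ σ ∧ Illuminates B (dir p q r δ σ) x := by
  have hx1 := hB.abs_le_one hx
  obtain ⟨⟨hc, -, -⟩, hu, -⟩ := hB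
  obtain ⟨z, hzs, hz⟩ := hsmall x hx
  have hδ2 : δ < 1 / 2 := by linarith [abs_nonneg (x z)]
  obtain ⟨v, hσ, hiz⟩ := exists_nonconstantOff_update_select_ne hp hq hr hpq hpr hqr
    (fun j => decide (x j < 0)) hzs
  set σ := update (fun j => decide (x j < 0)) z v
  set i := select p q r σ
  have hopp : ∀ j ≠ z, dir p q r δ σ j * x j = -((if j = i then 1 else δ) * |x j|) := by
    intro j hj
    have hσj : σ j = decide (x j < 0) := update_of_ne hj _ _
    rw [dir, mul_assoc, hσj, boolSign_decide_neg_mul, mul_neg]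
  have hscale : ∀ j, 0 < (if j = i then 1 else δ) := fun j => by split_ifs <;> positivity
  refine ⟨σ, hσ, ?_⟩
  rcases le_or_gt (∑ j ∈ univ.erase s₀, (1 - |x j|)) 1 with hβ | hβ
  · have hi : i ≠ s₀ := select_ne hp hq hr σ
    have hxi : 2 * δ < |x i| := by
      have := add_le_sum (f := fun j => 1 - |x j|) (fun j _ => sub_nonneg.2 (hx1 j))
        (mem_erase.2 ⟨hi, mem_univ i⟩) (mem_erase.2 ⟨hzs, mem_univ z⟩) hiz
      linarith
    refine hu.illuminates_of_mem_allOnes_sub hc hx hx1 (hin i hi) (abs_pos.1 (by linarith))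
      (by simpa using hopp i hiz) hδ hδ2 fun j hji => ⟨?_, ?_⟩
    · rw [dir_apply_of_ne hji, abs_mul, abs_boolSign, mul_one, abs_of_pos hδ]
    · rcases eq_or_ne j z with rfl | hjz
      · exact Or.inr hz
      · left; rw [hopp j hjz]; nlinarith [hscale j, abs_nonneg (x j)]
  · obtain ⟨c, hcB, hxc⟩ := exists_mem_abs_le_of_one_lt_sum hc hin hx1 hβ
    refine hu.illuminates_of_abs_le hc hcB (fun j => (hxc j).1) fun j => ?_
    by_cases hj : j ≠ z ∧ x j ≠ 0
    · left; rw [hopp j hj.1]; nlinarith [hscale j, abs_pos.2 hj.2]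
    · right
      refine (hxc j).2 ?_
      rcases not_and_or.1 hj with hj | hj
      · rw [not_not.1 hj]; linarith
      · rw [not_not.1 hj, abs_zero]; norm_num

end Directions

theorem illumNumber_le {K : Set (Fin n → ℝ)} (D : Finset (Fin n → ℝ)) (hD0 : ∀ d ∈ D, d ≠ 0)
    (hD : IlluminatesSet K D) : illumNumber K ≤ #D :=
  Nat.sInf_le ⟨D, rfl, hD0, hD⟩

/-- If `B ∈ 𝒰^n`, `n ≥ 4`, contains `𝟙 - e_i` for all `i ≠ s₀` but
not `𝟙 - e_{s₀}`, then `B` is illuminated by a symmetric set of at most `2^n - 4`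
directions, each with exactly one coordinate `±1` at an index `≠ s₀` and all
other coordinates `±δ`; in particular `𝕀(B) ≤ 2^n - 4`. -/
theorem stmt11 (n : ℕ) (hn : 4 ≤ n) (B : Set (Fin n → ℝ)) (hB : memU B)
    (s₀ : Fin n) (hin : ∀ i : Fin n, i ≠ s₀ → allOnes - stdB i ∈ B)
    (hout : allOnes - stdB s₀ ∉ B) :
    ∃ δ : ℝ, 0 < δ ∧ δ < 1 ∧ ∃ D : Finset (Fin n → ℝ),
      (∀ d ∈ D, -d ∈ D) ∧ D.card ≤ 2 ^ n - 4 ∧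
      (∀ d ∈ D, ∃ i : Fin n, i ≠ s₀ ∧ (d i = 1 ∨ d i = -1) ∧
        ∀ j, j ≠ i → d j = δ ∨ d j = -δ) ∧
      IlluminatesSet B ↑D ∧ illumNumber B ≤ 2 ^ n - 4 := by
  obtain ⟨δ, hδ, hδ2, hsmall⟩ := hB.exists_abs_lt_one_sub hout
  obtain ⟨p, hp, q, hq, r, hr, hpq, hpr, hqr⟩ := (two_lt_card (s := univ.erase s₀)).1 (by
    rw [card_erase_of_mem (mem_univ _), card_univ, Fintype.card_fin]; omega)
  simp only [mem_erase, Finset.mem_univ, and_true] at hp hq hr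
  set D := (univ.filter (NonconstantOff s₀)).image (dir p q r δ)
  have hshape : ∀ d ∈ D, ∃ i : Fin n, i ≠ s₀ ∧ (d i = 1 ∨ d i = -1) ∧
      ∀ j, j ≠ i → d j = δ ∨ d j = -δ := by
    simp only [D, Finset.mem_image]
    rintro _ ⟨σ, -, rfl⟩
    refine ⟨_, select_ne hp hq hr σ, by rw [dir_apply_select]; exact boolSign_eq_or _,
      fun j hj => ?_⟩
    rw [dir_apply_of_ne hj]
    rcases boolSign_eq_or (σ j) with h | h <;> simp [h]
  have hill : IlluminatesSet B D := fun x hx => by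
    obtain ⟨σ, hσ, hσx⟩ := hB.exists_nonconstantOff_illuminates hp hq hr hpq hpr hqr hin hδ hsmall
      (hB.1.2.1.isClosed.frontier_subset hx)
    exact ⟨_, mem_image_of_mem _ (mem_filter.2 ⟨mem_univ _, hσ⟩), hσx⟩
  have hcard : #D ≤ 2 ^ n - 4 := card_image_le.trans (card_filter_nonconstantOff_le hp)
  refine ⟨δ, hδ, by linarith, D, ?_, hcard, hshape, hill, (illumNumber_le D ?_ hill).trans hcard⟩
  · simp only [D, Finset.mem_image, mem_filter, Finset.mem_univ, true_and]
    rintro _ ⟨σ, hσ, rfl⟩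
    exact ⟨_, hσ.not, dir_not δ σ⟩
  · rintro d hd rfl
    obtain ⟨i, -, hi, -⟩ := hshape 0 hd
    norm_num at hi
end
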